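/- Every preferred extension of a consistent Deductive ASPIC⊖ argumentation system satisfies direct consistency: if E is a preferred extension then there are no φ, ψ ∈ E^C with φ = ¬ψ or ¬φ = ψ. -/

import Mathlib

namespace JS

inductive Lab : Type
  | IN | OUT | UNDEC
deriving DecidableEq

structure JSBAF (A : Type) where
  att : A → A → Prop
  supp : Set A → A → Prop
  pref : A → A → Prop

variable {A : Type}

/-- Strict arguments: supported by the empty set or only by strict arguments. -/
inductive Strict (J : JSBAF A) : A → Prop
  | mk (S : Set A) (a : A) (h : J.supp S a) (hS : ∀ b ∈ S, Strict J b) : Strict J a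

/-- Structural restrictions on JSBAFs. -/
structure Restr (J : JSBAF A) : Prop where
  finSupp : ∀ S b, J.supp S b → S.Finite
  uniqSupp : ∀ S S' b, J.supp S b → J.supp S' b → S = S'
  acyc : ∀ a, ¬ Relation.TransGen (fun x y => ∃ S, J.supp S y ∧ x ∈ S) a a
  strictUnatt : ∀ a b, Strict J b → ¬ J.att a b
  prefRefl : ∀ a, J.pref a a
  prefTrans : ∀ a b c, J.pref a b → J.pref b c → J.pref a c
  prefTotal : ∀ a b, J.pref a b ∨ J.pref b a
  strictEq : ∀ a b, Strict J a → Strict J b → J.pref a b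
  strictTop : ∀ a b, ¬ Strict J a → Strict J b → J.pref a b ∧ ¬ J.pref b a

def inL (L : A → Lab) : Set A := {a | L a = Lab.IN}
def outL (L : A → Lab) : Set A := {a | L a = Lab.OUT}
def undecL (L : A → Lab) : Set A := {a | L a = Lab.UNDEC}

/-- Definition 2, item 1: legally IN. -/
def legallyIn (J : JSBAF A) (L : A → Lab) (a : A) : Prop :=
  (∀ b, J.att b a → L b = Lab.OUT) ∧
  ∀ S c, J.supp S c → a ∈ S → (∀ b ∈ S, b ≠ a → J.pref a b) →
    (L c = Lab.IN ∨
     (L c = Lab.UNDEC ∧ ∃ b ∈ S, b ≠ a ∧ (L b = Lab.OUT ∨ L b = Lab.UNDEC)) ∨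
     (L c = Lab.OUT ∧
       ((∃ b ∈ S, b ≠ a ∧ L b = Lab.OUT) ∨
        (∃ b₁ ∈ S, ∃ b₂ ∈ S, b₁ ≠ a ∧ b₂ ≠ a ∧ b₁ ≠ b₂ ∧
          L b₁ = Lab.UNDEC ∧ L b₂ = Lab.UNDEC))))

/-- Definition 2, item 2: legally OUT. -/
def legallyOut (J : JSBAF A) (L : A → Lab) (a : A) : Prop :=
  (∃ b, J.att b a ∧ L b = Lab.IN) ∨
  (∃ (n : ℕ) (S : ℕ → Set A) (b : ℕ → A),
    (∀ i ≤ n, J.supp (S i) (b i)) ∧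
    (∀ i < n, b i ∈ S (i + 1)) ∧
    a ∈ S 0 ∧
    (∀ d ∈ S 0, d ≠ a → L d = Lab.IN) ∧
    (∃ c, J.att c (b n) ∧ L c = Lab.IN) ∧
    (∀ i ≤ n, L (b i) = Lab.OUT) ∧
    (∀ i, 1 ≤ i → i ≤ n → ∀ d ∈ S i, d ≠ b (i - 1) → L d = Lab.IN) ∧
    (∀ d ∈ S 0, d ≠ a → J.pref a d))

/-- Admissible labelings. -/
def Admissible (J : JSBAF A) (L : A → Lab) : Prop :=
  (∀ a, L a = Lab.IN → legallyIn J L a) ∧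
  (∀ a, L a = Lab.OUT ↔ legallyOut J L a) ∧
  (∀ a, Strict J a → L a = Lab.IN)

/-- Preferred labelings: maximal admissible w.r.t. inclusion of IN-sets. -/
def Preferred (J : JSBAF A) (L : A → Lab) : Prop :=
  Admissible J L ∧ ∀ L', Admissible J L' → ¬ (inL L ⊂ inL L')

/-- The iterated OUT-sets of the SIM labeling. -/
def simO (J : JSBAF A) : ℕ → Set A
  | 0 => {a | ∃ b, Strict J b ∧ J.att b a}
  | n + 1 => simO J n ∪
      {a | ∃ S c, J.supp S c ∧ a ∈ S ∧ c ∈ simO J n ∧ ∀ d ∈ S, d ≠ a → Strict J d}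

def simIn (J : JSBAF A) : Set A := {a | Strict J a}
def simOut (J : JSBAF A) : Set A := ⋃ n, simO J n

open Classical in
/-- The strict-including-minimal labeling. -/
noncomputable def SIM (J : JSBAF A) : A → Lab := fun a =>
  if Strict J a then Lab.IN else if a ∈ simOut J then Lab.OUT else Lab.UNDEC

/-- The order on labelings. -/
def leL (L₁ L₂ : A → Lab) : Prop := inL L₁ ⊆ inL L₂ ∧ outL L₁ ⊆ outL L₂

end JS
namespace ASPIC

/-- An underlying logical language: formulas, atoms, interpretations, a classical
negation and conjunction, and the interpolation-style assumption on syntactically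
disjoint sets of formulas. -/
structure Logic where
  F : Type
  Atom : Type
  atoms : F → Set Atom
  I : Type
  inhab : Nonempty I
  Models : I → F → Prop
  neg : F → F
  conj : F → F → F
  neg_spec : ∀ i φ, Models i (neg φ) ↔ ¬ Models i φ
  conj_spec : ∀ i φ ψ, Models i (conj φ ψ) ↔ (Models i φ ∧ Models i ψ)
  atoms_neg : ∀ φ, atoms (neg φ) = atoms φ
  atoms_conj : ∀ φ ψ, atoms (conj φ ψ) = atoms φ ∪ atoms ψ
  interp : ∀ Γ Δ : Set F, (∀ φ ∈ Γ, ∀ ψ ∈ Δ, atoms φ ∩ atoms ψ = ∅) →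
    (∃ i, ∀ φ ∈ Γ, Models i φ) → (∃ i, ∀ ψ ∈ Δ, Models i ψ) →
    (∃ i, (∀ φ ∈ Γ, Models i φ) ∧ (∀ ψ ∈ Δ, Models i ψ))

/-- The model-based consequence relation ⊨_C. -/
def Conseq (L : Logic) (Γ : Set L.F) (φ : L.F) : Prop :=
  ∀ i, (∀ ψ ∈ Γ, L.Models i ψ) → L.Models i φ

/-- φ = −ψ: one formula is the negation of the other. -/
def negOf (L : Logic) (φ ψ : L.F) : Prop := φ = L.neg ψ ∨ ψ = L.neg φ

/-- Conjunction of a nonempty list of formulas: conjL L φ [ψ₁,…] = φ ∧ ψ₁ ∧ … . -/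
def conjL (L : Logic) : L.F → List L.F → L.F
  | φ, [] => φ
  | φ, ψ :: l => L.conj φ (conjL L ψ l)

/-- A (defeasible) rule: antecedents and conclusion. -/
abbrev Rule (L : Logic) := List L.F × L.F

/-- An argumentation system of Deductive ASPIC⊖: satisfiable axioms, defeasible rules,
a (partial) naming function and a total preorder on defeasible rules.  The strict rules
are the axiomatic rules together with all consequence-based rules. -/
structure ASys (L : Logic) where
  AX : Set L.F
  AX_sat : ∃ i, ∀ φ ∈ AX, L.Models i φ
  Rd : Set (Rule L)
  name : Rule L → Option L.F
  rpref : Rule L → Rule L → Prop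
  rpref_refl : ∀ r, rpref r r
  rpref_trans : ∀ r s t, rpref r s → rpref s t → rpref r t
  rpref_total : ∀ r s, rpref r s ∨ rpref s r

/-- Top-rule kinds: axiomatic, consequence-based strict, defeasible. -/
inductive RK : Type
  | ax | cb | df
deriving DecidableEq

/-- Argument trees (with the kind of the top rule and the conclusion recorded). -/
inductive Arg (L : Logic) : Type
  | node (k : RK) (subs : List (Arg L)) (concl : L.F)

def Arg.concl {L : Logic} : Arg L → L.F
  | .node _ _ φ => φ

def Arg.subs {L : Logic} : Arg L → List (Arg L)
  | .node _ s _ => s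

def Arg.kind {L : Logic} : Arg L → RK
  | .node k _ _ => k

/-- Well-formed arguments of an argumentation system. -/
inductive Wf (L : Logic) (as : ASys L) : Arg L → Prop
  | ax (φ : L.F) (h : φ ∈ as.AX) : Wf L as (.node .ax [] φ)
  | cb (subs : List (Arg L)) (φ : L.F) (hs : ∀ a ∈ subs, Wf L as a)
      (h : Conseq L {ψ | ∃ a ∈ subs, Arg.concl a = ψ} φ) : Wf L as (.node .cb subs φ)
  | df (subs : List (Arg L)) (φ : L.F) (hs : ∀ a ∈ subs, Wf L as a)
      (h : (subs.map Arg.concl, φ) ∈ as.Rd) : Wf L as (.node .df subs φ)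

/-- Sub-argument relation: `Sub a b` means a is a sub-argument of b. -/
inductive Sub (L : Logic) : Arg L → Arg L → Prop
  | refl (a : Arg L) : Sub L a a
  | step (a b : Arg L) (k : RK) (subs : List (Arg L)) (φ : L.F)
      (hb : b ∈ subs) (h : Sub L a b) : Sub L a (.node k subs φ)

/-- Conclusions of the sub-arguments of a. -/
def SubC (L : Logic) (a : Arg L) : Set L.F := {φ | ∃ b, Sub L b a ∧ Arg.concl b = φ}

/-- Axiomatic and defeasible sub-arguments. -/
def ADSub (L : Logic) (a : Arg L) : Set (Arg L) := {b | Sub L b a ∧ Arg.kind b ≠ RK.cb}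

/-- Conclusions of the axiomatic and defeasible sub-arguments. -/
def ADSubC (L : Logic) (a : Arg L) : Set L.F :=
  {φ | ∃ b, Sub L b a ∧ Arg.kind b ≠ RK.cb ∧ Arg.concl b = φ}

/-- Defeasible rules used in an argument. -/
def DR (L : Logic) (a : Arg L) : Set (Rule L) :=
  {r | ∃ subs, Sub L (Arg.node RK.df subs r.2) a ∧ r.1 = subs.map Arg.concl}

/-- Strict arguments: no defeasible rules used. -/
def IsStrictArg (L : Logic) (a : Arg L) : Prop := DR L a = ∅

/-- Elitist weakest-link lifting of the rule preorder to arguments (a ⪯_ewl b). -/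
def ewl (L : Logic) (as : ASys L) (a b : Arg L) : Prop :=
  (DR L a = ∅ ∧ DR L b = ∅) ∨ ∃ ra ∈ DR L a, ∀ rb ∈ DR L b, as.rpref ra rb

/-- a undercuts b: the conclusion of a is the negation of the name of a defeasible rule
used in b. -/
def Undercuts (L : Logic) (as : ASys L) (a b : Arg L) : Prop :=
  ∃ subs φ, Sub L (Arg.node RK.df subs φ) b ∧
    ∃ nm, as.name (subs.map Arg.concl, φ) = some nm ∧ negOf L (Arg.concl a) nm

/-- a gen-rebuts b: b is defeasible and the conclusion of a is the negation of a conjunction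
of conclusions of sub-arguments of b. -/
def GenRebuts (L : Logic) (a b : Arg L) : Prop :=
  DR L b ≠ ∅ ∧ ∃ (φ : L.F) (l : List L.F),
    (∀ χ ∈ φ :: l, χ ∈ SubC L b) ∧ Arg.concl a = L.neg (conjL L φ l)

/-- a defeats b: a undercuts b, or a gen-rebuts b and a is not strictly weaker than b. -/
def Defeats (L : Logic) (as : ASys L) (a b : Arg L) : Prop :=
  Undercuts L as a b ∨
    (GenRebuts L a b ∧ ¬ (ewl L as a b ∧ ¬ ewl L as b a))

/-- The strict rules of an argumentation system: axiomatic or consequence-based. -/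
def StrictRule (L : Logic) (as : ASys L) (r : Rule L) : Prop :=
  (r.1 = [] ∧ r.2 ∈ as.AX) ∨ Conseq L {φ | φ ∈ r.1} r.2

end ASPIC

namespace ASPIC

/-- The well-formed arguments of an argumentation system. -/
def WfArg (L : Logic) (as : ASys L) : Type := {a : Arg L // Wf L as a}

/-- The JSBAF corresponding to an argumentation system: attacks are defeats, supports are
applications of strict rules, preferences are the elitist weakest-link lifting. -/
def toJ (L : Logic) (as : ASys L) : JS.JSBAF (WfArg L as) where
  att a b := Defeats L as a.1 b.1
  supp S b := (Arg.kind b.1 = RK.ax ∨ Arg.kind b.1 = RK.cb) ∧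
    S = {a : WfArg L as | a.1 ∈ Arg.subs b.1}
  pref a b := ewl L as a.1 b.1

/-- The conclusions of the IN-arguments of a labeling. -/
def concls (L : Logic) (as : ASys L) (Lb : WfArg L as → JS.Lab) : Set L.F :=
  {φ | ∃ a : WfArg L as, Lb a = JS.Lab.IN ∧ Arg.concl a.1 = φ}

/-- The AS is consistent: no two strict arguments have contradictory conclusions. -/
def ASConsistent (L : Logic) (as : ASys L) : Prop :=
  ¬ ∃ a b : Arg L, Wf L as a ∧ Wf L as b ∧ DR L a = ∅ ∧ DR L b = ∅ ∧
      negOf L (Arg.concl a) (Arg.concl b)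

end ASPIC

/-!
If accepted arguments `a`, `b` conclude `¬ψ` and `ψ`, appending the classical step `ψ ⊢ ¬¬ψ`
to `b` gives an argument `b'` concluding the negation of `a`'s conclusion; `b'` is accepted
because its only premise is, and it uses exactly the defeasible rules of `b`. Now `a` defeats `b`
unless `b` is strict or `a ≺ b`, and `b'` defeats `a` unless `a` is strict or `b ≺ a` (strict
weakness under `⪯_ewl`). A strict argument is never strictly weaker than another, and `a ≺ b`
excludes `b ≺ a`, so both defeats fail only when `a` and `b` are strict, which consistency rules
out. Either way one accepted argument attacks another.
-/

namespace JS

variable {A : Type} {J : JSBAF A} {L : A → Lab} {a b c : A}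

theorem legallyIn.not_att (ha : legallyIn J L a) (hb : L b = Lab.IN) : ¬ J.att b a :=
  fun hatt => by simpa [hb] using ha.1 b hatt

theorem legallyIn.eq_in_of_supp_singleton (ha : legallyIn J L a) (hc : J.supp {a} c) :
    L c = Lab.IN := by
  rcases ha.2 {a} c hc rfl (by simp) with
    h | ⟨_, b, hb, hba, _⟩ | ⟨_, ⟨b, hb, hba, _⟩ | ⟨b, hb, _, _, hba, -⟩⟩
  · exact h
  all_goals exact absurd hb hba

end JS

namespace ASPIC

variable {L : Logic} {as : ASys L}

theorem Wf.cb_singleton {b : Arg L} {ψ : L.F} (hb : Wf L as b)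
    (h : ∀ i, L.Models i (Arg.concl b) → L.Models i ψ) : Wf L as (.node .cb [b] ψ) :=
  Wf.cb [b] ψ (by simpa using hb) fun i hi => h i (hi _ ⟨b, by simp, rfl⟩)

theorem Sub.of_cb_singleton {x b : Arg L} {ψ : L.F} (h : Sub L x (.node .cb [b] ψ)) :
    x = .node .cb [b] ψ ∨ Sub L x b := by
  cases h with
  | refl => exact Or.inl rfl
  | step _ _ _ _ hb hsub => exact Or.inr (List.mem_singleton.1 hb ▸ hsub)

theorem DR_cb_singleton (b : Arg L) (ψ : L.F) : DR L (.node .cb [b] ψ) = DR L b := by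
  ext r
  constructor
  · rintro ⟨subs, hsub, hr⟩
    rcases Sub.of_cb_singleton hsub with h | h
    · exact absurd (congrArg Arg.kind h) (by simp [Arg.kind])
    · exact ⟨subs, h, hr⟩
  · rintro ⟨subs, hsub, hr⟩
    exact ⟨subs, Sub.step _ b _ [b] ψ (by simp) hsub, hr⟩

theorem ewl_of_DR_eq_empty_right (a : Arg L) {b : Arg L} (hb : DR L b = ∅) : ewl L as a b := by
  by_cases ha : DR L a = ∅
  · exact Or.inl ⟨ha, hb⟩
  · obtain ⟨ra, hra⟩ := Set.nonempty_iff_ne_empty.2 ha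
    exact Or.inr ⟨ra, hra, by simp [hb]⟩

theorem ewl_congr_left {a a' b : Arg L} (h : DR L a = DR L a') :
    ewl L as a b ↔ ewl L as a' b := by
  simp only [ewl, h]

theorem genRebuts_of_concl_eq_neg {a b : Arg L} (hb : DR L b ≠ ∅)
    (h : Arg.concl a = L.neg (Arg.concl b)) : GenRebuts L a b :=
  ⟨hb, Arg.concl b, [], by simpa using ⟨b, Sub.refl b, rfl⟩, h⟩

theorem defeats_of_concl_eq_neg {a b : Arg L} (hb : DR L b ≠ ∅)
    (h : Arg.concl a = L.neg (Arg.concl b)) (hab : ¬ (ewl L as a b ∧ ¬ ewl L as b a)) :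
    Defeats L as a b :=
  Or.inr ⟨genRebuts_of_concl_eq_neg hb h, hab⟩

theorem defeats_or_defeats_of_concl_eq_neg {a b b' : Arg L}
    (hstrict : ¬ (DR L a = ∅ ∧ DR L b = ∅)) (hab : Arg.concl a = L.neg (Arg.concl b))
    (hb'a : Arg.concl b' = L.neg (Arg.concl a)) (hDR : DR L b' = DR L b) :
    Defeats L as a b ∨ Defeats L as b' a := by
  by_cases hweak : ewl L as a b ∧ ¬ ewl L as b a
  · have ha : DR L a ≠ ∅ := fun h => hweak.2 (ewl_of_DR_eq_empty_right b h)
    exact Or.inr (defeats_of_concl_eq_neg ha hb'a fun h => hweak.2 ((ewl_congr_left hDR).1 h.1))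
  by_cases hb : DR L b = ∅
  · have ha : DR L a ≠ ∅ := fun h => hstrict ⟨h, hb⟩
    exact Or.inr (defeats_of_concl_eq_neg ha hb'a fun h =>
      h.2 (ewl_of_DR_eq_empty_right a (hDR.trans hb)))
  · exact Or.inl (defeats_of_concl_eq_neg hb hab hweak)

theorem false_of_in_of_concl_eq_neg (hcons : ASConsistent L as) {Lb : WfArg L as → JS.Lab}
    (hadm : JS.Admissible (toJ L as) Lb) {a b : WfArg L as} (ha : Lb a = JS.Lab.IN)
    (hb : Lb b = JS.Lab.IN) (hab : Arg.concl a.1 = L.neg (Arg.concl b.1)) : False := by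
  have hstrict : ¬ (DR L a.1 = ∅ ∧ DR L b.1 = ∅) :=
    fun h => hcons ⟨a.1, b.1, a.2, b.2, h.1, h.2, Or.inl hab⟩
  let b' : WfArg L as := ⟨.node .cb [b.1] (L.neg (Arg.concl a.1)), b.2.cb_singleton fun i hi => by
    rw [hab, L.neg_spec, L.neg_spec]
    exact not_not_intro hi⟩
  have hsupp : (toJ L as).supp {b} b' :=
    ⟨Or.inr rfl, Set.ext fun _ => ⟨fun hx => hx ▸ List.mem_singleton_self _,
      fun hx => Subtype.ext (List.mem_singleton.1 hx)⟩⟩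
  have hb' : Lb b' = JS.Lab.IN := (hadm.1 b hb).eq_in_of_supp_singleton hsupp
  rcases defeats_or_defeats_of_concl_eq_neg hstrict hab rfl (DR_cb_singleton _ _) with h | h
  · exact (hadm.1 b hb).not_att ha h
  · exact (hadm.1 a ha).not_att hb' h

end ASPIC

open ASPIC in
/-- Every preferred extension of a consistent Deductive ASPIC⊖ argumentation system
satisfies direct consistency: no two conclusions of accepted arguments contradict each other. -/
theorem preferred_direct_consistency (L : Logic) (as : ASys L)
    (hcons : ASConsistent L as)
    (Lb : WfArg L as → JS.Lab) (hpr : JS.Preferred (toJ L as) Lb) :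
    ∀ φ ∈ concls L as Lb, ∀ ψ ∈ concls L as Lb, ¬ negOf L φ ψ := by
  rintro _ ⟨a, ha, rfl⟩ _ ⟨b, hb, rfl⟩ (hab | hba)
  · exact false_of_in_of_concl_eq_neg hcons hpr.1 ha hb hab
  · exact false_of_in_of_concl_eq_neg hcons hpr.1 hb ha hba
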